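/- Let F be the 2×2 polynomial matrix with F₁₁ = 2(x₁−1)² + (x₂−1)² + (x₂−2)², F₁₂ = 3 − 2x₂, F₂₂ = 2(x₁−2)² + (x₂−1)² + (x₂−2)². For every ε ∈ (0, 1/2) there do NOT exist 2×2 SOS polynomial matrices S_{1,0}(x₁), S_{1,1}(x₁) in x₁ alone and S_{2,0}(x₂), S_{2,1}(x₂) in x₂ alone such that F(x) − (1/2 − ε)I₂ = S_{1,0}(x₁) + (4−x₁²)S_{1,1}(x₁) + S_{2,0}(x₂) + (4−x₂²)S_{2,1}(x₂). -/

import Mathlib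

/-!
The atomic matrix measures `Φ₁ = E₁₁ δ_{x₁=1} + E₂₂ δ_{x₁=2}` and
`Φ₂ = ½ (1,-1)(1,-1)ᵀ δ_{x₂=1} + ½ (1,1)(1,1)ᵀ δ_{x₂=2}` have positive semidefinite weights and
atoms in `[-2, 2]`, so each is nonnegative on `S₀ + (4 - x_v²) S₁` in its own variable. Both have
total mass `I₂`, so on a matrix in one variable the other measure returns the trace at the origin.
Hence `L = Φ₁ + Φ₂ - tr ∘ eval 0` is nonnegative on the right-hand side, while `L F = 0` and
`L I₂ = 2` give `L (F - c I₂) = -2c < 0`.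
-/

open Matrix MvPolynomial

noncomputable def F11mat : Matrix (Fin 2) (Fin 2) (MvPolynomial (Fin 2) ℝ) :=
  !![2*(X 0 - 1)^2 + (X 1 - 1)^2 + (X 1 - 2)^2, 3 - 2 * X 1;
     3 - 2 * X 1, 2*(X 0 - 2)^2 + (X 1 - 1)^2 + (X 1 - 2)^2]

/-- A 2×2 polynomial matrix which is SOS and involves only the variable v. -/
def IsSOSIn (v : Fin 2) (S : Matrix (Fin 2) (Fin 2) (MvPolynomial (Fin 2) ℝ)) : Prop :=
  ∃ (s : ℕ) (R : Matrix (Fin s) (Fin 2) (MvPolynomial (Fin 2) ℝ)),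
    S = Rᵀ * R ∧ ∀ i j, (R i j).vars ⊆ {v}

section
variable {σ m n : Type*}

lemma posSemidef_map_eval_transpose_mul_self [Fintype m] [Finite n]
    (R : Matrix m n (MvPolynomial σ ℝ)) (p : σ → ℝ) :
    ((Rᵀ * R).map (eval p)).PosSemidef := by
  rw [Matrix.map_mul, transpose_map]
  exact posSemidef_conjTranspose_mul_self _

lemma map_eval_transpose_mul_self_congr [Fintype m] {s : Finset σ}
    (R : Matrix m n (MvPolynomial σ ℝ)) (hR : ∀ i j, (R i j).vars ⊆ s) {p q : σ → ℝ}
    (hpq : ∀ v ∈ s, p v = q v) :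
    (Rᵀ * R).map (eval p) = (Rᵀ * R).map (eval q) := by
  have hRpq : R.map (eval p) = R.map (eval q) := by
    ext i j
    exact eval₂Hom_congr' rfl (fun v hv _ => hpq v (hR i j hv)) rfl
  rw [Matrix.map_mul, Matrix.map_mul, transpose_map, transpose_map, hRpq]

lemma map_eval_add_smul (S₀ S₁ : Matrix m n (MvPolynomial σ ℝ)) (g : MvPolynomial σ ℝ)
    (p : σ → ℝ) : (S₀ + g • S₁).map (eval p) = S₀.map (eval p) + eval p g • S₁.map (eval p) := by
  ext i j
  simp

end

namespace IsSOSIn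

variable {v : Fin 2} {S : Matrix (Fin 2) (Fin 2) (MvPolynomial (Fin 2) ℝ)}

lemma posSemidef_map_eval (h : IsSOSIn v S) (p : Fin 2 → ℝ) : (S.map (eval p)).PosSemidef := by
  obtain ⟨s, R, rfl, -⟩ := h
  exact posSemidef_map_eval_transpose_mul_self R p

lemma map_eval_congr (h : IsSOSIn v S) {p q : Fin 2 → ℝ} (hpq : p v = q v) :
    S.map (eval p) = S.map (eval q) := by
  obtain ⟨s, R, rfl, hR⟩ := h
  exact map_eval_transpose_mul_self_congr R hR (by simpa using hpq)

end IsSOSIn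

def IsWeightedSOSIn (v : Fin 2) (A : Matrix (Fin 2) (Fin 2) (MvPolynomial (Fin 2) ℝ)) : Prop :=
  ∃ S₀ S₁, IsSOSIn v S₀ ∧ IsSOSIn v S₁ ∧ A = S₀ + ((4 : MvPolynomial (Fin 2) ℝ) - X v ^ 2) • S₁

namespace IsWeightedSOSIn

variable {v : Fin 2} {A : Matrix (Fin 2) (Fin 2) (MvPolynomial (Fin 2) ℝ)}

lemma posSemidef_map_eval (h : IsWeightedSOSIn v A) {p : Fin 2 → ℝ} (hp : p v ^ 2 ≤ 4) :
    (A.map (eval p)).PosSemidef := by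
  obtain ⟨S₀, S₁, h₀, h₁, rfl⟩ := h
  rw [map_eval_add_smul]
  exact (h₀.posSemidef_map_eval p).add ((h₁.posSemidef_map_eval p).smul (by simpa using hp))

lemma map_eval_congr (h : IsWeightedSOSIn v A) {p q : Fin 2 → ℝ} (hpq : p v = q v) :
    A.map (eval p) = A.map (eval q) := by
  obtain ⟨S₀, S₁, h₀, h₁, rfl⟩ := h
  simp only [map_eval_add_smul, h₀.map_eval_congr hpq, h₁.map_eval_congr hpq, eval_sub, eval_pow,
    eval_X, map_ofNat, hpq]

end IsWeightedSOSIn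

section

variable {σ n : Type*} [Fintype n]

noncomputable def atomPairing (p : σ → ℝ) (u : n → ℝ) (M : Matrix n n (MvPolynomial σ ℝ)) : ℝ :=
  u ⬝ᵥ M.map (eval p) *ᵥ u

lemma atomPairing_add (p : σ → ℝ) (u : n → ℝ) (M N : Matrix n n (MvPolynomial σ ℝ)) :
    atomPairing p u (M + N) = atomPairing p u M + atomPairing p u N := by
  simp [atomPairing, Matrix.map_add, add_mulVec]

lemma atomPairing_nonneg {p : σ → ℝ} {M : Matrix n n (MvPolynomial σ ℝ)}
    (hM : (M.map (eval p)).PosSemidef) (u : n → ℝ) : 0 ≤ atomPairing p u M :=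
  hM.dotProduct_mulVec_nonneg u

end

-- The atoms are placed at `x₂ = 0`, which a matrix in `x₁` alone does not see; likewise for `Φ₂`.
noncomputable def Φ₁ (M : Matrix (Fin 2) (Fin 2) (MvPolynomial (Fin 2) ℝ)) : ℝ :=
  atomPairing ![1, 0] ![1, 0] M + atomPairing ![2, 0] ![0, 1] M

noncomputable def Φ₂ (M : Matrix (Fin 2) (Fin 2) (MvPolynomial (Fin 2) ℝ)) : ℝ :=
  (atomPairing ![0, 1] ![1, -1] M + atomPairing ![0, 2] ![1, 1] M) / 2

noncomputable def separatingFunctional (M : Matrix (Fin 2) (Fin 2) (MvPolynomial (Fin 2) ℝ)) : ℝ :=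
  Φ₁ M + Φ₂ M - (M.map (eval 0)).trace

lemma separatingFunctional_add (M N : Matrix (Fin 2) (Fin 2) (MvPolynomial (Fin 2) ℝ)) :
    separatingFunctional (M + N) = separatingFunctional M + separatingFunctional N := by
  simp only [separatingFunctional, Φ₁, Φ₂, atomPairing_add, Matrix.map_add _ (map_add (eval 0)),
    trace_add]
  ring

lemma separatingFunctional_F11mat_sub_smul_one (c : ℝ) :
    separatingFunctional (F11mat - (C c : MvPolynomial (Fin 2) ℝ) • 1) = -(2 * c) := by
  simp [separatingFunctional, Φ₁, Φ₂, atomPairing, F11mat, dotProduct, mulVec, trace,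
    Fin.sum_univ_two, map_ofNat]
  ring

namespace IsWeightedSOSIn

variable {A : Matrix (Fin 2) (Fin 2) (MvPolynomial (Fin 2) ℝ)}

lemma Φ₁_nonneg (h : IsWeightedSOSIn 0 A) : 0 ≤ Φ₁ A :=
  add_nonneg (atomPairing_nonneg (h.posSemidef_map_eval (by norm_num)) _)
    (atomPairing_nonneg (h.posSemidef_map_eval (by norm_num)) _)

lemma Φ₂_nonneg (h : IsWeightedSOSIn 1 A) : 0 ≤ Φ₂ A :=
  div_nonneg (add_nonneg (atomPairing_nonneg (h.posSemidef_map_eval (by norm_num)) _)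
    (atomPairing_nonneg (h.posSemidef_map_eval (by norm_num)) _)) zero_le_two

lemma separatingFunctional_eq_Φ₁ (h : IsWeightedSOSIn 0 A) : separatingFunctional A = Φ₁ A := by
  have h₁ : A.map (eval ![0, 1]) = A.map (eval 0) := h.map_eval_congr (by simp)
  have h₂ : A.map (eval ![0, 2]) = A.map (eval 0) := h.map_eval_congr (by simp)
  simp only [separatingFunctional, Φ₂, atomPairing, h₁, h₂]
  simp [dotProduct, mulVec, trace, Fin.sum_univ_two]
  ring

lemma separatingFunctional_eq_Φ₂ (h : IsWeightedSOSIn 1 A) : separatingFunctional A = Φ₂ A := by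
  have h₁ : A.map (eval ![1, 0]) = A.map (eval 0) := h.map_eval_congr (by simp)
  have h₂ : A.map (eval ![2, 0]) = A.map (eval 0) := h.map_eval_congr (by simp)
  simp only [separatingFunctional, Φ₁, atomPairing, h₁, h₂]
  simp [dotProduct, mulVec, trace, Fin.sum_univ_two]

end IsWeightedSOSIn

theorem stmt_11_general (ε : ℝ) (hε : ε < 1/2) :
    ¬ ∃ S10 S11 S20 S21 : Matrix (Fin 2) (Fin 2) (MvPolynomial (Fin 2) ℝ),
        IsSOSIn 0 S10 ∧ IsSOSIn 0 S11 ∧ IsSOSIn 1 S20 ∧ IsSOSIn 1 S21 ∧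
          F11mat - (MvPolynomial.C (1/2 - ε) : MvPolynomial (Fin 2) ℝ) • (1 : Matrix (Fin 2) (Fin 2) (MvPolynomial (Fin 2) ℝ)) =
            S10 + ((4 : MvPolynomial (Fin 2) ℝ) - X 0 ^ 2) • S11 +
              S20 + ((4 : MvPolynomial (Fin 2) ℝ) - X 1 ^ 2) • S21 := by
  rintro ⟨S10, S11, S20, S21, h10, h11, h20, h21, heq⟩
  have hA : IsWeightedSOSIn 0 (S10 + ((4 : MvPolynomial (Fin 2) ℝ) - X 0 ^ 2) • S11) :=
    ⟨S10, S11, h10, h11, rfl⟩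
  have hB : IsWeightedSOSIn 1 (S20 + ((4 : MvPolynomial (Fin 2) ℝ) - X 1 ^ 2) • S21) :=
    ⟨S20, S21, h20, h21, rfl⟩
  have hsep := separatingFunctional_F11mat_sub_smul_one (1/2 - ε)
  rw [heq, add_assoc _ S20, separatingFunctional_add, hA.separatingFunctional_eq_Φ₁,
    hB.separatingFunctional_eq_Φ₂] at hsep
  linarith [hA.Φ₁_nonneg, hB.Φ₂_nonneg]

/-- For every ε ∈ (0,1/2) there is no correlatively sparse weighted SOS representation
F(x) − (1/2 − ε)I₂ = S₁₀(x₁) + (4−x₁²)S₁₁(x₁) + S₂₀(x₂) + (4−x₂²)S₂₁(x₂)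
with SOS matrices S₁₀,S₁₁ in x₁ alone and S₂₀,S₂₁ in x₂ alone. -/
theorem stmt_11 (ε : ℝ) (hε0 : 0 < ε) (hε : ε < 1/2) :
    ¬ ∃ S10 S11 S20 S21 : Matrix (Fin 2) (Fin 2) (MvPolynomial (Fin 2) ℝ),
        IsSOSIn 0 S10 ∧ IsSOSIn 0 S11 ∧ IsSOSIn 1 S20 ∧ IsSOSIn 1 S21 ∧
          F11mat - (MvPolynomial.C (1/2 - ε) : MvPolynomial (Fin 2) ℝ) • (1 : Matrix (Fin 2) (Fin 2) (MvPolynomial (Fin 2) ℝ)) =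
            S10 + ((4 : MvPolynomial (Fin 2) ℝ) - X 0 ^ 2) • S11 +
              S20 + ((4 : MvPolynomial (Fin 2) ℝ) - X 1 ^ 2) • S21 :=
  stmt_11_general ε hε
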